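/- arXiv:1710.04898 — 2 statements merged into one kernel-verified Lean document; each statement's English description precedes it below -/
import Mathlib

section
/- There is a constant C2 > 0 depending only on d such that for every g ∈ SL_d(ℝ) there exists h ∈ SL_d(ℝ) with h ≠ I_d, h·(gℤ^d) = gℤ^d (equality of subsets of ℝ^d), and ‖h − I_d‖_op ≤ C2 · δ(g)^{d/(d−1)}. (This expresses the upper bound r_0(x) ≤ C2 δ(x)^{d/(d−1)} for the injectivity radius of the point x = g·SL_d(ℤ) in SL_d(ℝ)/SL_d(ℤ).) -/
/-!
Let `w = g v` be a nearly shortest vector of `gℤ^d`, `‖w‖ < 2 δ(g)`. For every nonzero `u ∈ ℤ^d`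
with `u ⬝ v = 0` the transvection `h = g (1 + v uᵀ) g⁻¹` is unipotent, stabilises `gℤ^d`, and
`h - 1 = w (uᵀ g⁻¹)` has norm at most `‖w‖ ‖uᵀ g⁻¹‖`. Such a `u` with `‖uᵀ g⁻¹‖ ≤ r ≍ ‖w‖^{1/(d-1)}`
comes from Minkowski's theorem for the dual lattice stretched by the factor `t = 2 r ‖w‖` along `v`:
the stretched lattice has covolume `t`, and for a point of it in the `r`-ball
`t |u ⬝ v| ≤ r ‖w‖ = t / 2`, so the integer `u ⬝ v` vanishes.
-/

open Matrix

/-- The Euclidean norm on `ℝ^d`. -/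
noncomputable def euclNorm {d : ℕ} (x : Fin d → ℝ) : ℝ :=
  Real.sqrt (∑ i, x i ^ 2)

/-- `δ(g) = inf {‖g v‖ : v ∈ ℤ^d, v ≠ 0}` (Euclidean norm). -/
noncomputable def deltaMin {d : ℕ} (g : Matrix (Fin d) (Fin d) ℝ) : ℝ :=
  sInf {r | ∃ v : Fin d → ℤ, v ≠ 0 ∧ r = euclNorm (g.mulVec (fun i => (v i : ℝ)))}

/-- The operator norm of a matrix with respect to the Euclidean norm on `ℝ^d`. -/
noncomputable def opNorm {d : ℕ} (M : Matrix (Fin d) (Fin d) ℝ) : ℝ :=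
  sSup ((fun x => euclNorm (M.mulVec x)) '' {x : Fin d → ℝ | euclNorm x ≤ 1})

/-- The lattice `gℤ^d = {g v : v ∈ ℤ^d} ⊆ ℝ^d`. -/
def latticeOf {d : ℕ} (g : Matrix (Fin d) (Fin d) ℝ) : Set (Fin d → ℝ) :=
  {x | ∃ v : Fin d → ℤ, x = g.mulVec (fun i => (v i : ℝ))}

open MeasureTheory

section EuclideanNorm

variable {d : ℕ}

lemma euclNorm_eq_norm_toLp (x : Fin d → ℝ) : euclNorm x = ‖WithLp.toLp 2 x‖ := by
  simp [euclNorm, EuclideanSpace.norm_eq]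

lemma euclNorm_nonneg (x : Fin d → ℝ) : 0 ≤ euclNorm x := Real.sqrt_nonneg _

lemma euclNorm_smul (c : ℝ) (x : Fin d → ℝ) : euclNorm (c • x) = |c| * euclNorm x := by
  simp only [euclNorm_eq_norm_toLp, WithLp.toLp_smul, norm_smul, Real.norm_eq_abs]

lemma abs_dotProduct_le_euclNorm_mul (x y : Fin d → ℝ) :
    |x ⬝ᵥ y| ≤ euclNorm x * euclNorm y := by
  simpa [euclNorm_eq_norm_toLp, EuclideanSpace.inner_eq_star_dotProduct, dotProduct_comm] using
    abs_real_inner_le_norm (WithLp.toLp 2 x) (WithLp.toLp 2 y)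

lemma one_le_euclNorm_intCast {v : Fin d → ℤ} (hv : v ≠ 0) :
    1 ≤ euclNorm (fun i => (v i : ℝ)) := by
  obtain ⟨i, hi⟩ := Function.ne_iff.mp hv
  calc (1 : ℝ) ≤ ‖(v i : ℝ)‖ := by
        rw [Real.norm_eq_abs, ← Int.cast_abs]; exact_mod_cast Int.one_le_abs hi
    _ ≤ euclNorm (fun i => (v i : ℝ)) := by
      rw [euclNorm_eq_norm_toLp]
      exact PiLp.norm_apply_le (WithLp.toLp 2 (fun i => (v i : ℝ))) i

open scoped Matrix.Norms.L2Operator in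
lemma euclNorm_mulVec_le (A : Matrix (Fin d) (Fin d) ℝ) (x : Fin d → ℝ) :
    euclNorm (A *ᵥ x) ≤ ‖A‖ * euclNorm x := by
  simpa [euclNorm_eq_norm_toLp] using l2_opNorm_mulVec A (WithLp.toLp 2 x)

lemma euclNorm_pos {x : Fin d → ℝ} (hx : x ≠ 0) : 0 < euclNorm x := by
  rw [euclNorm_eq_norm_toLp, norm_pos_iff]
  simpa using hx

lemma opNorm_vecMulVec_le (a b : Fin d → ℝ) :
    opNorm (vecMulVec a b) ≤ euclNorm a * euclNorm b := by
  refine Real.sSup_le ?_ (mul_nonneg (euclNorm_nonneg a) (euclNorm_nonneg b))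
  rintro _ ⟨x, hx, rfl⟩
  simp only [vecMulVec_mulVec, op_smul_eq_smul, euclNorm_smul]
  calc |b ⬝ᵥ x| * euclNorm a ≤ euclNorm b * euclNorm x * euclNorm a :=
        mul_le_mul_of_nonneg_right (abs_dotProduct_le_euclNorm_mul b x) (euclNorm_nonneg a)
    _ ≤ euclNorm b * 1 * euclNorm a := by
        have := euclNorm_nonneg a; have := euclNorm_nonneg b; gcongr; exact hx
    _ = euclNorm a * euclNorm b := by ring

end EuclideanNorm

section IntegerVectors

variable {d : ℕ}

lemma intCast_mulVec (T : Matrix (Fin d) (Fin d) ℤ) (v : Fin d → ℤ) :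
    T.map (↑) *ᵥ (fun i => (v i : ℝ)) = fun i => ((T *ᵥ v) i : ℝ) := by
  ext i
  exact ((Int.castRingHom ℝ).map_mulVec T v i).symm

lemma intCast_dotProduct (u v : Fin d → ℤ) :
    (fun i => (u i : ℝ)) ⬝ᵥ (fun i => (v i : ℝ)) = ((u ⬝ᵥ v : ℤ) : ℝ) :=
  ((Int.castRingHom ℝ).map_dotProduct u v).symm

end IntegerVectors

section Minimum

variable {d : ℕ} {g : Matrix (Fin d) (Fin d) ℝ}

lemma deltaMin_le {v : Fin d → ℤ} (hv : v ≠ 0) :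
    deltaMin g ≤ euclNorm (g *ᵥ fun i => (v i : ℝ)) :=
  csInf_le ⟨0, by rintro _ ⟨w, -, rfl⟩; exact euclNorm_nonneg _⟩ ⟨v, hv, rfl⟩

open scoped Matrix.Norms.L2Operator in
lemma deltaMin_pos [NeZero d] (hg : IsUnit g.det) : 0 < deltaMin g := by
  have hne : (Pi.single 0 1 : Fin d → ℤ) ≠ 0 := by simp
  have hbound : ∀ v : Fin d → ℤ, v ≠ 0 → 1 ≤ ‖g⁻¹‖ * euclNorm (g *ᵥ fun i => (v i : ℝ)) :=
    fun v hv => calc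
      1 ≤ euclNorm (fun i => (v i : ℝ)) := one_le_euclNorm_intCast hv
      _ = euclNorm (g⁻¹ *ᵥ g *ᵥ fun i => (v i : ℝ)) := by
        rw [mulVec_mulVec, nonsing_inv_mul g hg, one_mulVec]
      _ ≤ _ := euclNorm_mulVec_le _ _
  have hinv : 0 < ‖g⁻¹‖ :=
    (norm_nonneg _).lt_of_ne fun h => by
      have := hbound _ hne
      rw [← h, zero_mul] at this
      exact absurd this (by norm_num)
  refine lt_of_lt_of_le (by positivity : 0 < 1 / ‖g⁻¹‖) (le_csInf ⟨_, _, hne, rfl⟩ ?_)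
  rintro _ ⟨v, hv, rfl⟩
  rw [div_le_iff₀' hinv]
  exact hbound v hv

lemma exists_euclNorm_mulVec_lt_two_mul_deltaMin [NeZero d] (hg : IsUnit g.det) :
    ∃ v : Fin d → ℤ, v ≠ 0 ∧ euclNorm (g *ᵥ fun i => (v i : ℝ)) < 2 * deltaMin g := by
  have hne : (Pi.single 0 1 : Fin d → ℤ) ≠ 0 := by simp
  obtain ⟨_, ⟨v, hv, rfl⟩, hlt⟩ := exists_lt_of_csInf_lt
    (s := {r | ∃ v : Fin d → ℤ, v ≠ 0 ∧ r = euclNorm (g *ᵥ fun i => (v i : ℝ))})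
    ⟨_, _, hne, rfl⟩ (by linarith [deltaMin_pos hg] : deltaMin g < 2 * deltaMin g)
  exact ⟨v, hv, hlt⟩

end Minimum


noncomputable def unitBallVolume (d : ℕ) : ℝ :=
  (volume (Metric.ball (0 : EuclideanSpace ℝ (Fin d)) 1)).toReal

lemma unitBallVolume_pos (d : ℕ) : 0 < unitBallVolume d :=
  ENNReal.toReal_pos (Metric.measure_ball_pos volume 0 one_pos).ne' measure_ball_lt_top.ne

lemma setOf_euclNorm_le_eq_preimage {d : ℕ} (r : ℝ) :
    {x : Fin d → ℝ | euclNorm x ≤ r} = WithLp.toLp 2 ⁻¹' Metric.closedBall 0 r := by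
  ext x
  simp [euclNorm_eq_norm_toLp]

lemma volume_setOf_euclNorm_le {d : ℕ} {r : ℝ} (hr : 0 ≤ r) :
    volume {x : Fin d → ℝ | euclNorm x ≤ r} = ENNReal.ofReal (r ^ d * unitBallVolume d) := by
  have hpres := (EuclideanSpace.volume_preserving_symm_measurableEquiv_toLp (Fin d)).symm
  have hpre : volume (WithLp.toLp 2 ⁻¹' Metric.closedBall (0 : EuclideanSpace ℝ (Fin d)) r) =
      volume (Metric.closedBall (0 : EuclideanSpace ℝ (Fin d)) r) :=
    hpres.measure_preimage measurableSet_closedBall.nullMeasurableSet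
  rw [setOf_euclNorm_le_eq_preimage, hpre, Measure.addHaar_closedBall _ _ hr,
    finrank_euclideanSpace_fin, ENNReal.ofReal_mul (by positivity), unitBallVolume,
    ENNReal.ofReal_toReal measure_ball_lt_top.ne]

lemma exists_intVec_ne_zero_euclNorm_mulVec_le {d : ℕ} {A : Matrix (Fin d) (Fin d) ℝ}
    (hA : A.det ≠ 0) {r : ℝ} (hr : 0 < r) (hvol : |A.det| * 2 ^ d < r ^ d * unitBallVolume d) :
    ∃ u : Fin d → ℤ, u ≠ 0 ∧ euclNorm (A *ᵥ fun i => (u i : ℝ)) ≤ r := by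
  let b : Module.Basis (Fin d) ℝ (Fin d → ℝ) :=
    (Pi.basisFun ℝ (Fin d)).map (A.toLinearEquiv' (A.invertibleOfIsUnitDet hA.isUnit))
  have hb : ∀ i, b i = A *ᵥ Pi.single i 1 := fun i => by simp [b, Matrix.toLinearEquiv']
  have hfund : volume (ZSpan.fundamentalDomain b) = ENNReal.ofReal |A.det| := by
    rw [ZSpan.volume_fundamentalDomain, ← det_transpose]
    congr 3
    ext i j
    simp [hb, mulVec_single]
  have hsymm : ∀ x ∈ {x : Fin d → ℝ | euclNorm x ≤ r}, -x ∈ {x : Fin d → ℝ | euclNorm x ≤ r} := by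
    intro x hx
    simpa [euclNorm_eq_norm_toLp] using hx
  have hconv : Convex ℝ {x : Fin d → ℝ | euclNorm x ≤ r} := by
    rw [setOf_euclNorm_le_eq_preimage]
    exact (convex_closedBall _ r).linear_preimage
      (WithLp.linearEquiv 2 ℝ (Fin d → ℝ)).symm.toLinearMap
  have : Countable (Submodule.span ℤ (Set.range b)).toAddSubgroup :=
    inferInstanceAs (Countable (Submodule.span ℤ (Set.range b)))
  obtain ⟨x, hx0, hxs⟩ := exists_ne_zero_mem_lattice_of_measure_mul_two_pow_lt_measure
    (ZSpan.isAddFundamentalDomain' b volume) hsymm hconv (by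
      rw [hfund, volume_setOf_euclNorm_le hr.le, Module.finrank_fin_fun, ← ENNReal.ofReal_ofNat,
        ← ENNReal.ofReal_pow (by norm_num), ← ENNReal.ofReal_mul (abs_nonneg _)]
      exact (ENNReal.ofReal_lt_ofReal_iff
        (mul_pos (pow_pos hr d) (unitBallVolume_pos d))).mpr hvol)
  obtain ⟨c, hc⟩ := (Submodule.mem_span_range_iff_exists_fun ℤ).mp x.2
  have hAc : A *ᵥ (fun i => (c i : ℝ)) = x := by
    rw [← hc]
    ext j
    simp [Finset.sum_apply, hb, mulVec_single, mulVec, dotProduct, mul_comm]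
  refine ⟨c, ?_, hAc ▸ hxs⟩
  rintro rfl
  exact hx0 (Subtype.ext (by simp [← hc]))

lemma Matrix.det_one_add_vecMulVec {n R : Type*} [Fintype n] [DecidableEq n] [CommRing R]
    (a b : n → R) : (1 + vecMulVec a b).det = 1 + b ⬝ᵥ a := by
  rw [vecMulVec_eq Unit, det_one_add_replicateCol_mul_replicateRow]

section Stretch

variable {d : ℕ}

noncomputable def stretchAlong (v : Fin d → ℝ) (s : ℝ) : Matrix (Fin d) (Fin d) ℝ :=
  1 + ((s - 1) / (v ⬝ᵥ v)) • vecMulVec v v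

variable {v : Fin d → ℝ} {s : ℝ}

lemma det_stretchAlong (hv : v ≠ 0) : (stretchAlong v s).det = s := by
  have hvv : v ⬝ᵥ v ≠ 0 := dotProduct_self_eq_zero.not.mpr hv
  rw [stretchAlong, ← smul_vecMulVec, det_one_add_vecMulVec, dotProduct_smul, smul_eq_mul,
    div_mul_cancel₀ _ hvv, add_sub_cancel]

lemma vecMul_stretchAlong (x : Fin d → ℝ) :
    x ᵥ* stretchAlong v s = x + ((s - 1) / (v ⬝ᵥ v) * (x ⬝ᵥ v)) • v := by
  rw [stretchAlong, vecMul_add, vecMul_one, vecMul_smul, vecMul_vecMulVec, smul_smul]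

lemma vecMul_stretchAlong_dotProduct (hv : v ≠ 0) (x : Fin d → ℝ) :
    (x ᵥ* stretchAlong v s) ⬝ᵥ v = s * (x ⬝ᵥ v) := by
  have hvv : v ⬝ᵥ v ≠ 0 := dotProduct_self_eq_zero.not.mpr hv
  rw [vecMul_stretchAlong, add_dotProduct, smul_dotProduct, smul_eq_mul]
  field_simp
  ring

lemma vecMul_stretchAlong_of_dotProduct_eq_zero {x : Fin d → ℝ} (hx : x ⬝ᵥ v = 0) :
    x ᵥ* stretchAlong v s = x := by
  rw [vecMul_stretchAlong, hx, mul_zero, zero_smul, add_zero]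

end Stretch

lemma exists_orthogonal_intVec_euclNorm_vecMul_inv_le {d : ℕ} {g : Matrix (Fin d) (Fin d) ℝ}
    (hg : g.det = 1) {v : Fin d → ℤ} (hv : v ≠ 0) {r : ℝ} (hr : 0 < r)
    (hvol : 2 ^ (d + 1) * r * euclNorm (g *ᵥ fun i => (v i : ℝ)) < r ^ d * unitBallVolume d) :
    ∃ u : Fin d → ℤ, u ≠ 0 ∧ u ⬝ᵥ v = 0 ∧ euclNorm ((fun i => (u i : ℝ)) ᵥ* g⁻¹) ≤ r := by
  have hg' : IsUnit g.det := hg ▸ isUnit_one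
  set vR : Fin d → ℝ := fun i => (v i : ℝ)
  set w := g *ᵥ vR
  have hvR : vR ≠ 0 := fun h => hv (funext fun i => by simpa [vR] using congrFun h i)
  have hw : 0 < euclNorm w := euclNorm_pos fun h => hvR (by
    rw [← one_mulVec vR, ← nonsing_inv_mul g hg', ← mulVec_mulVec]; simp [w, h])
  set t := 2 * r * euclNorm w
  have ht : 0 < t := by positivity
  set A := (stretchAlong vR t * g⁻¹)ᵀ
  have hA : A.det = t := by
    rw [det_transpose, det_mul, det_stretchAlong hvR, det_nonsing_inv, hg, Ring.inverse_one,
      mul_one]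
  obtain ⟨u, hu, hAu⟩ := exists_intVec_ne_zero_euclNorm_mulVec_le (A := A) (hA ▸ ht.ne') hr
    (by rw [hA, abs_of_pos ht, show t * 2 ^ d = 2 ^ (d + 1) * r * euclNorm w by ring]; exact hvol)
  set uR : Fin d → ℝ := fun i => (u i : ℝ)
  have hAu_eq : A *ᵥ uR = (uR ᵥ* stretchAlong vR t) ᵥ* g⁻¹ := by
    rw [mulVec_transpose, vecMul_vecMul]
  have hdot : (A *ᵥ uR) ⬝ᵥ w = t * (uR ⬝ᵥ vR) := by
    rw [hAu_eq, ← dotProduct_mulVec, mulVec_mulVec, nonsing_inv_mul g hg', one_mulVec,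
      vecMul_stretchAlong_dotProduct hvR]
  have huv : u ⬝ᵥ v = 0 := by
    have hle : t * |uR ⬝ᵥ vR| ≤ t / 2 := calc
      t * |uR ⬝ᵥ vR| = |(A *ᵥ uR) ⬝ᵥ w| := by rw [hdot, abs_mul, abs_of_pos ht]
      _ ≤ euclNorm (A *ᵥ uR) * euclNorm w := abs_dotProduct_le_euclNorm_mul _ _
      _ ≤ r * euclNorm w := mul_le_mul_of_nonneg_right hAu hw.le
      _ = t / 2 := by ring
    have : |((u ⬝ᵥ v : ℤ) : ℝ)| < 1 := by
      rw [← intCast_dotProduct]; nlinarith [abs_nonneg (uR ⬝ᵥ vR)]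
    exact Int.abs_lt_one_iff.mp (by exact_mod_cast this)
  refine ⟨u, hu, huv, ?_⟩
  rwa [hAu_eq, vecMul_stretchAlong_of_dotProduct_eq_zero
    (by rw [intCast_dotProduct, huv, Int.cast_zero])] at hAu

section Exponents

variable {d : ℕ}

lemma rpow_one_div_sub_one_pow (hd : 2 ≤ d) {x : ℝ} (hx : 0 ≤ x) :
    (x ^ (1 / ((d : ℝ) - 1))) ^ (d - 1) = x := by
  have hcast : ((d - 1 : ℕ) : ℝ) = (d : ℝ) - 1 := by rw [Nat.cast_sub (by omega), Nat.cast_one]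
  rw [← hcast, one_div, Real.rpow_inv_natCast_pow hx (by omega)]

lemma mul_rpow_one_div_sub_one (hd : 2 ≤ d) {x : ℝ} (hx : 0 < x) :
    x * x ^ (1 / ((d : ℝ) - 1)) = x ^ ((d : ℝ) / ((d : ℝ) - 1)) := by
  have hd1 : (d : ℝ) - 1 ≠ 0 := by
    have : (2 : ℝ) ≤ d := by exact_mod_cast hd
    linarith
  conv_lhs => arg 1; rw [← Real.rpow_one x]
  rw [← Real.rpow_add hx]
  congr 1
  field_simp
  ring

end Exponents

lemma exists_orthogonal_intVec_mul_euclNorm_le {d : ℕ} (hd : 2 ≤ d)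
    {g : Matrix (Fin d) (Fin d) ℝ} (hg : g.det = 1) {v : Fin d → ℤ} (hv : v ≠ 0) :
    ∃ u : Fin d → ℤ, u ≠ 0 ∧ u ⬝ᵥ v = 0 ∧
      euclNorm (g *ᵥ fun i => (v i : ℝ)) * euclNorm ((fun i => (u i : ℝ)) ᵥ* g⁻¹) ≤
        (2 ^ (d + 2) / unitBallVolume d) ^ (1 / ((d : ℝ) - 1)) *
          euclNorm (g *ᵥ fun i => (v i : ℝ)) ^ ((d : ℝ) / ((d : ℝ) - 1)) := by
  have hω := unitBallVolume_pos d
  set a : ℝ := 2 ^ (d + 2) / unitBallVolume d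
  set δv := euclNorm (g *ᵥ fun i => (v i : ℝ))
  have hδv : 0 < δv := by
    have hg' : IsUnit g.det := hg ▸ isUnit_one
    have : NeZero d := ⟨by omega⟩
    exact (deltaMin_pos hg').trans_le (deltaMin_le hv)
  -- `r` is chosen so that the Minkowski volume condition holds with a factor of 2 to spare.
  set r := (a * δv) ^ (1 / ((d : ℝ) - 1)) with hr_def
  have hr : 0 < r := by positivity
  have hvol : 2 ^ (d + 1) * r * δv < r ^ d * unitBallVolume d := by
    have hrd : r ^ d = a * δv * r := by
      rw [← Nat.sub_add_cancel (by omega : 1 ≤ d), pow_succ,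
        rpow_one_div_sub_one_pow hd (by positivity)]
    have ha : a * unitBallVolume d = 2 ^ (d + 2) := div_mul_cancel₀ _ hω.ne'
    rw [hrd, show a * δv * r * unitBallVolume d = a * unitBallVolume d * r * δv by ring, ha]
    have : (2 : ℝ) ^ (d + 1) < 2 ^ (d + 2) := pow_lt_pow_right₀ one_lt_two (by omega)
    nlinarith [mul_pos hr hδv]
  obtain ⟨u, hu, huv, hur⟩ := exists_orthogonal_intVec_euclNorm_vecMul_inv_le hg hv hr hvol
  refine ⟨u, hu, huv, ?_⟩
  calc δv * euclNorm ((fun i => (u i : ℝ)) ᵥ* g⁻¹) ≤ δv * r :=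
        mul_le_mul_of_nonneg_left hur hδv.le
    _ = _ := by
        rw [hr_def, Real.mul_rpow (by positivity) hδv.le, mul_left_comm,
          mul_rpow_one_div_sub_one hd hδv]

section Stabilizer

variable {d : ℕ}

lemma image_mulVec_latticeOf (h g : Matrix (Fin d) (Fin d) ℝ) :
    (fun x => h *ᵥ x) '' latticeOf g = latticeOf (h * g) := by
  ext x
  constructor
  · rintro ⟨_, ⟨v, rfl⟩, rfl⟩
    exact ⟨v, mulVec_mulVec _ _ _⟩
  · rintro ⟨v, rfl⟩
    exact ⟨_, ⟨v, rfl⟩, mulVec_mulVec _ _ _⟩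

lemma latticeOf_mul_intCast {T : Matrix (Fin d) (Fin d) ℤ} (hT : IsUnit T)
    (g : Matrix (Fin d) (Fin d) ℝ) : latticeOf (g * T.map (↑)) = latticeOf g := by
  obtain ⟨T', hT'⟩ := hT.exists_right_inv
  ext x
  constructor
  · rintro ⟨v, rfl⟩
    exact ⟨T *ᵥ v, by rw [← mulVec_mulVec, intCast_mulVec]⟩
  · rintro ⟨v, rfl⟩
    refine ⟨T' *ᵥ v, ?_⟩
    rw [← mulVec_mulVec, intCast_mulVec, mulVec_mulVec, hT', one_mulVec]

lemma exists_lattice_stabilizer {g : Matrix (Fin d) (Fin d) ℝ} (hg : IsUnit g.det)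
    {u v : Fin d → ℤ} (hu : u ≠ 0) (hv : v ≠ 0) (huv : u ⬝ᵥ v = 0) :
    ∃ h : Matrix (Fin d) (Fin d) ℝ, h.det = 1 ∧ h ≠ 1 ∧
      (fun x => h *ᵥ x) '' latticeOf g = latticeOf g ∧
      h - 1 = vecMulVec (g *ᵥ fun i => (v i : ℝ)) ((fun i => (u i : ℝ)) ᵥ* g⁻¹) := by
  set uR : Fin d → ℝ := fun i => (u i : ℝ)
  set vR : Fin d → ℝ := fun i => (v i : ℝ)
  have hg' : IsUnit g := (isUnit_iff_isUnit_det g).mpr hg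
  set T : Matrix (Fin d) (Fin d) ℤ := 1 + vecMulVec v u
  have hT : IsUnit T := by
    rw [isUnit_iff_isUnit_det, det_one_add_vecMulVec, huv, add_zero]
    exact isUnit_one
  have hTR : T.map (↑) = 1 + vecMulVec vR uR := by
    ext i j
    by_cases hij : i = j <;> simp [T, vecMulVec_apply, one_apply, hij, uR, vR]
  have hdotR : uR ⬝ᵥ vR = 0 := by rw [intCast_dotProduct, huv, Int.cast_zero]
  refine ⟨g * T.map (↑) * g⁻¹, ?_, ?_, ?_, ?_⟩
  · rw [det_conj hg', hTR, det_one_add_vecMulVec, hdotR, add_zero]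
  · intro h1
    have hX : vecMulVec vR uR = 0 := by
      have : T.map (↑) = (1 : Matrix (Fin d) (Fin d) ℝ) := by
        have := congrArg (fun M => g⁻¹ * M * g) h1
        rwa [mul_assoc g, nonsing_inv_mul_cancel_left (h := hg),
          nonsing_inv_mul_cancel_right (h := hg), mul_one, nonsing_inv_mul g hg] at this
      rwa [hTR, add_eq_left] at this
    rcases vecMulVec_eq_zero.mp hX with h0 | h0
    · exact hv (funext fun i => by simpa [vR] using congrFun h0 i)
    · exact hu (funext fun i => by simpa [uR] using congrFun h0 i)
  · rw [image_mulVec_latticeOf, mul_assoc, nonsing_inv_mul g hg, mul_one,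
      latticeOf_mul_intCast hT]
  · rw [hTR, mul_add, add_mul, mul_one, mul_nonsing_inv g hg, add_sub_cancel_left,
      mul_vecMulVec, vecMulVec_mul]

end Stabilizer

/-- Upper bound for the injectivity radius: there is `C₂ > 0` depending only on `d`
such that for every `g ∈ SL_d(ℝ)` there exists `h ∈ SL_d(ℝ)`, `h ≠ I_d`, stabilizing
the lattice `gℤ^d`, with `‖h − I_d‖_op ≤ C₂ δ(g)^{d/(d−1)}`. -/
theorem injectivity_radius_upper_bound (d : ℕ) (hd : 2 ≤ d) :
    ∃ C2 : ℝ, 0 < C2 ∧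
      ∀ g : Matrix (Fin d) (Fin d) ℝ, g.det = 1 →
        ∃ h : Matrix (Fin d) (Fin d) ℝ, h.det = 1 ∧ h ≠ 1 ∧
          (fun x => h.mulVec x) '' latticeOf g = latticeOf g ∧
          opNorm (h - 1) ≤ C2 * (deltaMin g) ^ ((d : ℝ) / ((d : ℝ) - 1)) := by
  have : NeZero d := ⟨by omega⟩
  have hp : 0 ≤ (d : ℝ) / ((d : ℝ) - 1) := by
    have : (2 : ℝ) ≤ d := by exact_mod_cast hd
    exact div_nonneg (by linarith) (by linarith)
  have hω := unitBallVolume_pos d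
  set K : ℝ := (2 ^ (d + 2) / unitBallVolume d) ^ (1 / ((d : ℝ) - 1))
  refine ⟨K * 2 ^ ((d : ℝ) / ((d : ℝ) - 1)), by positivity, fun g hg => ?_⟩
  have hg' : IsUnit g.det := hg ▸ isUnit_one
  obtain ⟨v, hv, hvδ⟩ := exists_euclNorm_mulVec_lt_two_mul_deltaMin hg'
  obtain ⟨u, hu, huv, hvu⟩ := exists_orthogonal_intVec_mul_euclNorm_le hd hg hv
  obtain ⟨h, hdet, hne, hlat, hsub⟩ := exists_lattice_stabilizer hg' hu hv huv
  refine ⟨h, hdet, hne, hlat, ?_⟩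
  calc opNorm (h - 1) ≤ K * euclNorm (g *ᵥ fun i => (v i : ℝ)) ^ ((d : ℝ) / ((d : ℝ) - 1)) :=
        hsub ▸ (opNorm_vecMulVec_le _ _).trans hvu
    _ ≤ K * (2 * deltaMin g) ^ ((d : ℝ) / ((d : ℝ) - 1)) := by
        have := euclNorm_nonneg (g *ᵥ fun i => (v i : ℝ))
        gcongr
    _ = K * 2 ^ ((d : ℝ) / ((d : ℝ) - 1)) * deltaMin g ^ ((d : ℝ) / ((d : ℝ) - 1)) := by
        rw [Real.mul_rpow two_pos.le (deltaMin_pos hg').le, mul_assoc]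
end

section
/- Let α = min(i_1, …, i_m, j_1, …, j_n). For every 0 < ε < 1, every h ∈ SL_d(ℝ) with max_{k,ℓ} |h_{kℓ} − (I_d)_{kℓ}| < ((2^α − 1)/d) · ε^{max(m,n)}, and every g ∈ SL_d(ℝ) with δ_{i,j}(g) < ε/2, one has δ_{i,j}(h g) < ε. (Consequently, U_{i,j}(ε/2) is contained in the inner r-core σ_r(U_{i,j}(ε)) = {x : dist(x, U_{i,j}(ε)^c) > r} whenever r is small compared with ε^{max(m,n)}.) -/
/-!
Take an integer vector `v ≠ 0` with `‖g v‖_{i,j} < ε/2` and put `u = g v`. Coordinatewise this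
says `|u_a| < (ε/2)^{t_a}`, where `t_a` is `m i_k` or `n j_ℓ`, so `α ≤ t_a ≤ max(m,n)`; in
particular `|u_a| ≤ 2^{-α}`. Hence `h u` differs from `u` in each coordinate by at most
`d · ((2^α - 1)/d) ε^{max(m,n)} · 2^{-α} ≤ (2^α - 1) ε^{t_a} / 2^α`, while
`(ε/2)^{t_a} ≤ ε^{t_a} / 2^α`. The two add up to `ε^{t_a}`, so `‖h g v‖_{i,j} < ε`.
-/

open Matrix

/-- The weighted quasinorm `‖x‖_w = max_k |x_k|^(1/w_k)`. -/
noncomputable def wnorm {k : ℕ} (w : Fin k → ℝ) (x : Fin k → ℝ) : ℝ :=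
  ⨆ l, |x l| ^ (1 / w l)

/-- The `(i,j)`-quasinorm of `v = (p, q) ∈ ℝ^m × ℝ^n`. -/
noncomputable def wnormIJ (m n : ℕ) (wi : Fin m → ℝ) (wj : Fin n → ℝ)
    (v : Fin m ⊕ Fin n → ℝ) : ℝ :=
  max ((wnorm wi (fun k => v (Sum.inl k))) ^ (1 / (m : ℝ)))
      ((wnorm wj (fun l => v (Sum.inr l))) ^ (1 / (n : ℝ)))

/-- `δ_{i,j}(g) = inf {‖g v‖_{i,j} : v ∈ ℤ^d, v ≠ 0}`. -/
noncomputable def deltaIJ (m n : ℕ) (wi : Fin m → ℝ) (wj : Fin n → ℝ)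
    (g : Matrix (Fin m ⊕ Fin n) (Fin m ⊕ Fin n) ℝ) : ℝ :=
  sInf {r | ∃ v : Fin m ⊕ Fin n → ℤ, v ≠ 0 ∧
    r = wnormIJ m n wi wj (g.mulVec (fun x => (v x : ℝ)))}

section WeightedNorm

variable {k : ℕ} {w : Fin k → ℝ}

lemma wnorm_nonneg (x : Fin k → ℝ) : 0 ≤ wnorm w x :=
  Real.iSup_nonneg fun _ => Real.rpow_nonneg (abs_nonneg _) _

lemma wnorm_lt_iff [Nonempty (Fin k)] (x : Fin k → ℝ) {C : ℝ} :
    wnorm w x < C ↔ ∀ l, |x l| ^ (1 / w l) < C := by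
  set f := fun l => |x l| ^ (1 / w l)
  refine ⟨fun h l => (le_ciSup (f := f) (Set.finite_range f).bddAbove l).trans_lt h, fun h => ?_⟩
  obtain ⟨l, hl⟩ := exists_eq_ciSup_of_finite (f := f)
  rw [wnorm, ← hl]
  exact h l

lemma wnorm_rpow_lt_iff (hk : 0 < k) (hw : ∀ l, 0 < w l) (x : Fin k → ℝ)
    {c : ℝ} (hc : 0 < c) :
    wnorm w x ^ (1 / (k : ℝ)) < c ↔ ∀ l, |x l| < c ^ ((k : ℝ) * w l) := by
  have : Nonempty (Fin k) := ⟨⟨0, hk⟩⟩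
  have hc' : 0 ≤ c ^ (k : ℝ) := Real.rpow_nonneg hc.le _
  rw [one_div, Real.rpow_inv_lt_iff_of_pos (wnorm_nonneg x) hc.le (Nat.cast_pos.2 hk),
    wnorm_lt_iff]
  refine forall_congr' fun l => ?_
  rw [one_div, Real.rpow_inv_lt_iff_of_pos (abs_nonneg _) hc' (hw l), Real.rpow_mul hc.le]

end WeightedNorm

def ijExponent (m n : ℕ) (wi : Fin m → ℝ) (wj : Fin n → ℝ) : Fin m ⊕ Fin n → ℝ :=
  Sum.elim (fun k => m * wi k) (fun l => n * wj l)

section IJNorm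

variable {m n : ℕ} {wi : Fin m → ℝ} {wj : Fin n → ℝ}

lemma wnormIJ_nonneg (v : Fin m ⊕ Fin n → ℝ) : 0 ≤ wnormIJ m n wi wj v :=
  le_max_of_le_left (Real.rpow_nonneg (wnorm_nonneg _) _)

lemma wnormIJ_lt_iff (hm : 0 < m) (hn : 0 < n) (hwi : ∀ k, 0 < wi k) (hwj : ∀ l, 0 < wj l)
    (v : Fin m ⊕ Fin n → ℝ) {c : ℝ} (hc : 0 < c) :
    wnormIJ m n wi wj v < c ↔ ∀ a, |v a| < c ^ ijExponent m n wi wj a := by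
  rw [wnormIJ, max_lt_iff, wnorm_rpow_lt_iff hm hwi _ hc, wnorm_rpow_lt_iff hn hwj _ hc,
    Sum.forall]
  rfl

lemma min_iInf_le_ijExponent (hm : 0 < m) (hn : 0 < n) (hwi : ∀ k, 0 ≤ wi k)
    (hwj : ∀ l, 0 ≤ wj l) (a : Fin m ⊕ Fin n) :
    min (⨅ k, wi k) (⨅ l, wj l) ≤ ijExponent m n wi wj a := by
  rcases a with k | l
  · calc min (⨅ k, wi k) (⨅ l, wj l) ≤ wi k :=
          (min_le_left _ _).trans (ciInf_le (Set.finite_range _).bddBelow k)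
      _ ≤ m * wi k := le_mul_of_one_le_left (hwi k) (Nat.one_le_cast.2 hm)
  · calc min (⨅ k, wi k) (⨅ l, wj l) ≤ wj l :=
          (min_le_right _ _).trans (ciInf_le (Set.finite_range _).bddBelow l)
      _ ≤ n * wj l := le_mul_of_one_le_left (hwj l) (Nat.one_le_cast.2 hn)

lemma ijExponent_le_max (hwi : ∀ k, 0 ≤ wi k) (hwj : ∀ l, 0 ≤ wj l)
    (hsi : ∑ k, wi k = 1) (hsj : ∑ l, wj l = 1) (a : Fin m ⊕ Fin n) :
    ijExponent m n wi wj a ≤ (max m n : ℕ) := by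
  have hle {r : ℕ} {w : Fin r → ℝ} (hw : ∀ i, 0 ≤ w i) (hs : ∑ i, w i = 1) (i : Fin r) :
      w i ≤ 1 :=
    hs ▸ Finset.single_le_sum (fun i _ => hw i) (Finset.mem_univ i)
  rcases a with k | l
  · calc (m : ℝ) * wi k ≤ m := mul_le_of_le_one_right m.cast_nonneg (hle hwi hsi k)
      _ ≤ (max m n : ℕ) := Nat.cast_le.2 (le_max_left m n)
  · calc (n : ℝ) * wj l ≤ n := mul_le_of_le_one_right n.cast_nonneg (hle hwj hsj l)
      _ ≤ (max m n : ℕ) := Nat.cast_le.2 (le_max_right m n)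

lemma deltaIJ_lt_iff [Nonempty (Fin m ⊕ Fin n)] (g : Matrix (Fin m ⊕ Fin n) (Fin m ⊕ Fin n) ℝ)
    {c : ℝ} :
    deltaIJ m n wi wj g < c ↔
      ∃ v : Fin m ⊕ Fin n → ℤ, v ≠ 0 ∧ wnormIJ m n wi wj (g *ᵥ fun x => (v x : ℝ)) < c := by
  have hbdd : BddBelow {r | ∃ v : Fin m ⊕ Fin n → ℤ, v ≠ 0 ∧
      r = wnormIJ m n wi wj (g *ᵥ fun x => (v x : ℝ))} := by
    refine ⟨0, ?_⟩
    rintro r ⟨v, -, rfl⟩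
    exact wnormIJ_nonneg _
  rw [deltaIJ, csInf_lt_iff hbdd ⟨_, 1, one_ne_zero, rfl⟩]
  constructor
  · rintro ⟨_, ⟨v, hv, rfl⟩, hlt⟩
    exact ⟨v, hv, hlt⟩
  · rintro ⟨v, hv, hlt⟩
    exact ⟨_, ⟨v, hv, rfl⟩, hlt⟩

end IJNorm

lemma abs_mulVec_sub_self_le {ι : Type*} [Fintype ι] [DecidableEq ι]
    {h : Matrix ι ι ℝ} {u : ι → ℝ} {η c : ℝ}
    (hh : ∀ a b, |h a b - (1 : Matrix ι ι ℝ) a b| ≤ η) (hu : ∀ b, |u b| ≤ c) (a : ι) :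
    |(h *ᵥ u) a - u a| ≤ Fintype.card ι * η * c := by
  have hη : 0 ≤ η := (abs_nonneg _).trans (hh a a)
  calc |(h *ᵥ u) a - u a| = |((h - 1) *ᵥ u) a| := by rw [sub_mulVec, one_mulVec, Pi.sub_apply]
    _ ≤ ∑ b, |h a b - (1 : Matrix ι ι ℝ) a b| * |u b| := by
        simpa only [mulVec, dotProduct, Matrix.sub_apply, abs_mul] using
          Finset.abs_sum_le_sum_abs (fun b => (h - 1) a b * u b) Finset.univ
    _ ≤ ∑ _b : ι, η * c :=
        Finset.sum_le_sum fun b _ => mul_le_mul (hh a b) (hu b) (abs_nonneg _) hη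
    _ = Fintype.card ι * η * c := by
        rw [Finset.sum_const, Finset.card_univ, nsmul_eq_mul, mul_assoc]

lemma half_rpow_le_div_two_rpow {ε α t : ℝ} (hε : 0 ≤ ε) (hαt : α ≤ t) :
    (ε / 2) ^ t ≤ ε ^ t / 2 ^ α := by
  rw [Real.div_rpow hε zero_le_two]
  exact div_le_div_of_nonneg_left (Real.rpow_nonneg hε _) (by positivity)
    (Real.rpow_le_rpow_of_exponent_le one_le_two hαt)

lemma half_rpow_add_le {ε α t M : ℝ} (hε0 : 0 < ε) (hε1 : ε ≤ 1) (hα : 0 ≤ α)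
    (hαt : α ≤ t) (htM : t ≤ M) :
    (ε / 2) ^ t + (2 ^ α - 1) * ε ^ M / 2 ^ α ≤ ε ^ t := by
  have h2α : 1 ≤ (2 : ℝ) ^ α := Real.one_le_rpow one_le_two hα
  have hM : ε ^ M ≤ ε ^ t := Real.rpow_le_rpow_of_exponent_ge hε0 hε1 htM
  calc (ε / 2) ^ t + (2 ^ α - 1) * ε ^ M / 2 ^ α
      ≤ ε ^ t / 2 ^ α + (2 ^ α - 1) * ε ^ t / 2 ^ α := by
        gcongr
        exact half_rpow_le_div_two_rpow hε0.le hαt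
    _ = ε ^ t := by field_simp; ring

theorem deltaIJ_lt_of_perturb_general (m n : ℕ) (hm : 0 < m) (hn : 0 < n)
    (wi : Fin m → ℝ) (wj : Fin n → ℝ)
    (hwi : ∀ k, 0 < wi k) (hwj : ∀ l, 0 < wj l)
    (hsi : ∑ k, wi k = 1) (hsj : ∑ l, wj l = 1)
    (ε : ℝ) (hε0 : 0 < ε) (hε1 : ε < 1)
    (h g : Matrix (Fin m ⊕ Fin n) (Fin m ⊕ Fin n) ℝ)
    (hsmall : ∀ a b : Fin m ⊕ Fin n,
      |h a b - (1 : Matrix (Fin m ⊕ Fin n) (Fin m ⊕ Fin n) ℝ) a b| <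
        (((2 : ℝ) ^ (min (⨅ k, wi k) (⨅ l, wj l)) - 1) / (m + n : ℝ)) *
          ε ^ (max m n))
    (hg : deltaIJ m n wi wj g < ε / 2) :
    deltaIJ m n wi wj (h * g) < ε := by
  have : Nonempty (Fin m ⊕ Fin n) := ⟨.inl ⟨0, hm⟩⟩
  set α := min (⨅ k, wi k) (⨅ l, wj l)
  have hα : 0 ≤ α := le_min (Real.iInf_nonneg fun k => (hwi k).le)
    (Real.iInf_nonneg fun l => (hwj l).le)
  have hαT := min_iInf_le_ijExponent hm hn (fun k => (hwi k).le) (fun l => (hwj l).le)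
  have hTM := ijExponent_le_max (fun k => (hwi k).le) (fun l => (hwj l).le) hsi hsj
  obtain ⟨v, hv, hgv⟩ := (deltaIJ_lt_iff g).1 hg
  refine (deltaIJ_lt_iff _).2 ⟨v, hv, ?_⟩
  rw [wnormIJ_lt_iff hm hn hwi hwj _ (half_pos hε0)] at hgv
  rw [← mulVec_mulVec, wnormIJ_lt_iff hm hn hwi hwj _ hε0]
  set u := g *ᵥ fun x => (v x : ℝ)
  have hu : ∀ b, |u b| ≤ 1 / 2 ^ α := fun b =>
    (hgv b).le.trans <| (half_rpow_le_div_two_rpow hε0.le (hαT b)).trans <|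
      div_le_div_of_nonneg_right (Real.rpow_le_one hε0.le hε1.le (hα.trans (hαT b)))
        (by positivity)
  intro a
  have herr : |(h *ᵥ u) a - u a| ≤ (2 ^ α - 1) * ε ^ ((max m n : ℕ) : ℝ) / 2 ^ α := by
    refine (abs_mulVec_sub_self_le (fun a b => (hsmall a b).le) hu a).trans_eq ?_
    rw [Fintype.card_sum, Fintype.card_fin, Fintype.card_fin, Real.rpow_natCast]
    push_cast
    field_simp
  calc |(h *ᵥ u) a| ≤ |u a| + |(h *ᵥ u) a - u a| :=
        sub_le_iff_le_add'.1 (abs_sub_abs_le_abs_sub _ _)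
    _ < (ε / 2) ^ ijExponent m n wi wj a + (2 ^ α - 1) * ε ^ ((max m n : ℕ) : ℝ) / 2 ^ α :=
        add_lt_add_of_lt_of_le (hgv a) herr
    _ ≤ ε ^ ijExponent m n wi wj a := half_rpow_add_le hε0 hε1.le hα (hαT a) (hTM a)

/-- Let `α = min(i₁, …, i_m, j₁, …, j_n)`. If every entry of `h − I_d` is smaller in
absolute value than `((2^α − 1)/d) ε^{max(m,n)}`, and `δ_{i,j}(g) < ε/2`, then
`δ_{i,j}(h g) < ε`. -/
theorem deltaIJ_lt_of_perturb (m n : ℕ) (hm : 0 < m) (hn : 0 < n)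
    (wi : Fin m → ℝ) (wj : Fin n → ℝ)
    (hwi : ∀ k, 0 < wi k) (hwj : ∀ l, 0 < wj l)
    (hsi : ∑ k, wi k = 1) (hsj : ∑ l, wj l = 1)
    (ε : ℝ) (hε0 : 0 < ε) (hε1 : ε < 1)
    (h g : Matrix (Fin m ⊕ Fin n) (Fin m ⊕ Fin n) ℝ)
    (hhdet : h.det = 1) (hgdet : g.det = 1)
    (hsmall : ∀ a b : Fin m ⊕ Fin n,
      |h a b - (1 : Matrix (Fin m ⊕ Fin n) (Fin m ⊕ Fin n) ℝ) a b| <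
        (((2 : ℝ) ^ (min (⨅ k, wi k) (⨅ l, wj l)) - 1) / (m + n : ℝ)) *
          ε ^ (max m n))
    (hg : deltaIJ m n wi wj g < ε / 2) :
    deltaIJ m n wi wj (h * g) < ε :=
  deltaIJ_lt_of_perturb_general m n hm hn wi wj hwi hwj hsi hsj ε hε0 hε1 h g hsmall hg
end
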